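/- arXiv:2305.05031 — 3 statements merged into one kernel-verified Lean document; each statement's English description precedes it below -/
import Mathlib

section
/- Let n ≥ 1 and let X : ZMod n → Matrix (Fin I₁) (Fin I₂) ℝ be a third-order real tensor. Then there exist a tensor U : ZMod n → Matrix (Fin I₁) (Fin I₁) ℝ orthogonal under the t-product, a tensor V : ZMod n → Matrix (Fin I₂) (Fin I₂) ℝ orthogonal under the t-product, and an f-diagonal tensor S : ZMod n → Matrix (Fin I₁) (Fin I₂) ℝ such that X = U ∗ S ∗ Vᵀ (existence of the tensor SVD, t-SVD). -/
open Matrix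

variable {n : ℕ}

/-- The t-product of two third-order tensors, modeled as circular convolution
of frontal slices. -/
noncomputable def tMul [NeZero n] {a b c : ℕ}
    (X : ZMod n → Matrix (Fin a) (Fin b) ℝ) (Y : ZMod n → Matrix (Fin b) (Fin c) ℝ) :
    ZMod n → Matrix (Fin a) (Fin c) ℝ :=
  fun k => ∑ j : ZMod n, X (k - j) * Y j

/-- The tensor transpose: transpose every frontal slice and reverse the order of
the frontal slices 2 through n. -/
def tTranspose {a b : ℕ} (X : ZMod n → Matrix (Fin a) (Fin b) ℝ) :
    ZMod n → Matrix (Fin b) (Fin a) ℝ :=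
  fun k => (X (-k))ᵀ

/-- The identity tensor: the first frontal slice is the identity matrix and all
other frontal slices are zero. -/
def tId (n m : ℕ) : ZMod n → Matrix (Fin m) (Fin m) ℝ :=
  fun k => if k = 0 then 1 else 0

/-- A tensor is orthogonal if `Qᵀ ∗ Q = Q ∗ Qᵀ = I` under the t-product. -/
def tOrthogonal [NeZero n] {m : ℕ} (Q : ZMod n → Matrix (Fin m) (Fin m) ℝ) : Prop :=
  tMul (tTranspose Q) Q = tId n m ∧ tMul Q (tTranspose Q) = tId n m


/-!
The DFT along the tube dimension turns the t-product into the slice-wise matrix product, the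
tensor transpose into the slice-wise conjugate transpose and the identity tensor into identity
slices. So it suffices to take a matrix SVD `X̂ ω = Uω * Dω * Vωᴴ` of every Fourier slice and to
transform back. The inverse transform of a family of slices is real exactly when the slices at
`ω` and `-ω` are complex conjugate; `X̂` has this symmetry, so one chooses the SVDs at `ω` and
`-ω` conjugate to each other, and real at the self-conjugate frequencies, where `X̂ ω` is real.
-/

open scoped ComplexConjugate InnerProductSpace ZMod

section OrthogonalFamily

variable {𝕜 E : Type*} [RCLike 𝕜] [NormedAddCommGroup E] [InnerProductSpace 𝕜 E]
  [FiniteDimensional 𝕜 E]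

theorem exists_orthonormalBasis_smul_eq_of_orthogonal {ι : Type*} [Fintype ι]
    (hcard : Module.finrank 𝕜 E = Fintype.card ι) {f : ι → E}
    (hf : Pairwise fun i j => ⟪f i, f j⟫_𝕜 = 0) :
    ∃ b : OrthonormalBasis ι 𝕜 E, ∀ i, f i = (‖f i‖ : 𝕜) • b i := by
  set s : Set ι := {i | f i ≠ 0}
  have hv : Orthonormal 𝕜 (s.domRestrict fun i => (‖f i‖⁻¹ : 𝕜) • f i) := by
    refine ⟨fun i => norm_smul_inv_norm i.2, fun i j hij => ?_⟩
    simp [Set.domRestrict, inner_smul_left, inner_smul_right, hf (Subtype.coe_ne_coe.mpr hij)]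
  obtain ⟨b, hb⟩ := hv.exists_orthonormalBasis_extension_of_card_eq hcard
  refine ⟨b, fun i => ?_⟩
  by_cases hi : f i = 0
  · simp [hi]
  · rw [hb i hi, smul_smul, mul_inv_cancel₀ (by simpa using hi), one_smul]

end OrthogonalFamily

namespace Matrix

variable {p q : ℕ}

def IsRectDiag {R : Type*} [Zero R] (D : Matrix (Fin p) (Fin q) R) : Prop :=
  ∀ (i : Fin p) (j : Fin q), (i : ℕ) ≠ j → D i j = 0

theorem IsRectDiag.conjTranspose {R : Type*} [AddMonoid R] [StarAddMonoid R]
    {D : Matrix (Fin p) (Fin q) R} (hD : D.IsRectDiag) : Dᴴ.IsRectDiag := fun i j hij => by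
  simp [hD j i (Ne.symm hij)]

/-- `A = U * D * Vᴴ` with `U`, `V` unitary and `D` rectangular diagonal; the diagonal entries of
`D` are not required to be real, nonnegative or ordered. -/
structure IsSVD {R : Type*} [CommRing R] [StarRing R] (A : Matrix (Fin p) (Fin q) R)
    (U : Matrix (Fin p) (Fin p) R) (V : Matrix (Fin q) (Fin q) R)
    (D : Matrix (Fin p) (Fin q) R) : Prop where
  unitary_left : U ∈ unitaryGroup (Fin p) R
  unitary_right : V ∈ unitaryGroup (Fin q) R
  isRectDiag : D.IsRectDiag
  eq : A = U * D * Vᴴ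

section Map

variable {R S : Type*} [CommRing R] [StarRing R] [CommRing S] [StarRing S] {f : R →+* S}

theorem map_mem_unitaryGroup {m : Type*} [Fintype m] [DecidableEq m]
    (hf : Function.Semiconj f star star) {U : Matrix m m R} (hU : U ∈ unitaryGroup m R) :
    U.map f ∈ unitaryGroup m S := by
  rw [mem_unitaryGroup_iff', star_eq_conjTranspose] at hU ⊢
  rw [← conjTranspose_map f hf, ← Matrix.map_mul, hU, Matrix.map_one f f.map_zero f.map_one]

theorem IsSVD.map {A : Matrix (Fin p) (Fin q) R} {U V D} (h : A.IsSVD U V D)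
    (hf : Function.Semiconj f star star) : (A.map f).IsSVD (U.map f) (V.map f) (D.map f) where
  unitary_left := map_mem_unitaryGroup hf h.unitary_left
  unitary_right := map_mem_unitaryGroup hf h.unitary_right
  isRectDiag i j hij := by simp [h.isRectDiag i j hij]
  eq := by rw [h.eq, Matrix.map_mul, Matrix.map_mul, conjTranspose_map f hf]

end Map

variable {𝕜 : Type*} [RCLike 𝕜]

theorem exists_unitary_mul_isRectDiag_of_isDiag (hqp : q ≤ p) {B : Matrix (Fin p) (Fin q) 𝕜}
    (hB : (Bᴴ * B).IsDiag) :
    ∃ U ∈ unitaryGroup (Fin p) 𝕜, ∃ D : Matrix (Fin p) (Fin q) 𝕜, D.IsRectDiag ∧ B = U * D := by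
  set f : Fin p → EuclideanSpace 𝕜 (Fin p) := fun i =>
    if h : (i : ℕ) < q then WithLp.toLp 2 (Bᵀ ⟨i, h⟩) else 0
  have hf : Pairwise fun i j => ⟪f i, f j⟫_𝕜 = 0 := by
    intro i j hij
    simp only [f]
    split_ifs with hi hj
    · have := hB (i := ⟨i, hi⟩) (j := ⟨j, hj⟩) (by simpa [Fin.ext_iff] using hij)
      simpa [PiLp.inner_apply, mul_apply, mul_comm] using this
    all_goals simp
  obtain ⟨b, hb⟩ := exists_orthonormalBasis_smul_eq_of_orthogonal (by simp) hf
  refine ⟨(EuclideanSpace.basisFun (Fin p) 𝕜).toBasis.toMatrix b,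
    (EuclideanSpace.basisFun (Fin p) 𝕜).toMatrix_orthonormalBasis_mem_unitary b,
    of fun i j => if (i : ℕ) = j then (‖f i‖ : 𝕜) else 0, fun i j hij => if_neg hij, ?_⟩
  ext k j
  rw [mul_apply, Finset.sum_eq_single (Fin.castLE hqp j)]
  · have := congrArg (· k) (hb (Fin.castLE hqp j))
    simp only [f, Fin.val_castLE, Fin.is_lt, ↓reduceDIte, Fin.eta, transpose_apply,
      algebraMap_smul, PiLp.smul_apply] at this
    simp [this, f, Module.Basis.toMatrix_apply, mul_comm, RCLike.real_smul_eq_coe_mul]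
  · intro i _ hi
    simp only [ne_eq, Fin.ext_iff, Fin.val_castLE] at hi
    simp [hi]
  · simp

/-- If `V` diagonalises `Aᴴ * A`, then `A * V` has orthogonal columns. -/
theorem exists_isSVD_of_le (hqp : q ≤ p) (A : Matrix (Fin p) (Fin q) 𝕜) :
    ∃ U V D, A.IsSVD U V D := by
  have hAA := isHermitian_conjTranspose_mul_self A
  set V : Matrix (Fin q) (Fin q) 𝕜 := (hAA.eigenvectorUnitary : Matrix (Fin q) (Fin q) 𝕜)
  have hV : V ∈ unitaryGroup (Fin q) 𝕜 := hAA.eigenvectorUnitary.2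
  have hdiag : ((A * V)ᴴ * (A * V)).IsDiag := by
    have := hAA.conjStarAlgAut_star_eigenvectorUnitary
    simp only [Unitary.conjStarAlgAut_apply, Unitary.coe_star, star_star] at this
    rw [conjTranspose_mul, Matrix.mul_assoc, ← Matrix.mul_assoc Aᴴ, ← Matrix.mul_assoc,
      ← star_eq_conjTranspose, this]
    exact isDiag_diagonal _
  obtain ⟨U, hU, D, hD, hAV⟩ := exists_unitary_mul_isRectDiag_of_isDiag hqp hdiag
  refine ⟨U, V, D, hU, hV, hD, ?_⟩
  rw [← hAV, Matrix.mul_assoc, ← star_eq_conjTranspose, Unitary.mul_star_self_of_mem hV,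
    Matrix.mul_one]

theorem exists_isSVD (A : Matrix (Fin p) (Fin q) 𝕜) : ∃ U V D, A.IsSVD U V D := by
  rcases le_total q p with hqp | hpq
  · exact exists_isSVD_of_le hqp A
  · obtain ⟨U, V, D, hU, hV, hD, hA⟩ := exists_isSVD_of_le hpq Aᴴ
    refine ⟨V, U, Dᴴ, hV, hU, hD.conjTranspose, ?_⟩
    rw [← conjTranspose_conjTranspose A, hA]
    simp [Matrix.mul_assoc]

theorem exists_isSVD_map_conj_eq (A : Matrix (Fin p) (Fin q) ℂ) :
    ∃ U V D, A.IsSVD U V D ∧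
      (A.map conj = A → U.map conj = U ∧ V.map conj = V ∧ D.map conj = D) := by
  by_cases hA : A.map conj = A
  · have hreal : (A.map Complex.re).map Complex.ofRealHom = A := by
      ext i j
      exact Complex.conj_eq_iff_re.mp (congrFun (congrFun hA i) j)
    obtain ⟨U, V, D, h⟩ := exists_isSVD (A.map Complex.re)
    have hconj {a b : ℕ} (M : Matrix (Fin a) (Fin b) ℝ) :
        (M.map Complex.ofRealHom).map conj = M.map Complex.ofRealHom := by
      ext i j
      simp
    refine ⟨_, _, _, hreal ▸ h.map (f := Complex.ofRealHom) fun x => by simp, fun _ =>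
      ⟨hconj U, hconj V, hconj D⟩⟩
  · obtain ⟨U, V, D, h⟩ := exists_isSVD A
    exact ⟨U, V, D, h, fun h' => absurd h' hA⟩

end Matrix

theorem exists_forall_and_map_neg_eq {ι α : Type*} [InvolutiveNeg ι] {P : ι → α → Prop}
    {c : α → α} (hc : Function.Involutive c) (hP : ∀ ω a, P ω a → P (-ω) (c a))
    (h : ∀ ω, ∃ a, P ω a ∧ (-ω = ω → c a = a)) :
    ∃ F : ι → α, ∀ ω, P ω (F ω) ∧ F (-ω) = c (F ω) := by
  classical
  -- choose freely on the smaller element of each pair `{ω, -ω}`, and by `c` on the larger one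
  let _ : LinearOrder ι := IsWellOrder.linearOrder WellOrderingRel
  choose f hf using h
  refine ⟨fun ω => if ω ≤ -ω then f ω else c (f (-ω)), fun ω => ⟨?_, ?_⟩⟩
  · dsimp only
    split_ifs
    · exact (hf ω).1
    · simpa using hP _ _ (hf (-ω)).1
  · rcases lt_trichotomy ω (-ω) with hlt | heq | hgt
    · simp [hlt.le, hlt.not_ge]
    · simp [← heq, (hf ω).2 heq.symm]
    · simp [hgt.le, hgt.not_ge, hc _]

namespace ZMod

variable {N : ℕ} [NeZero N] {E F : Type*} [AddCommGroup E] [Module ℂ E] [AddCommGroup F]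
  [Module ℂ F]

theorem map_dft (f : E →ₗ[ℂ] F) (Φ : ZMod N → E) (k : ZMod N) : f (𝓕 Φ k) = 𝓕 (f ∘ Φ) k := by
  simp [dft_apply, map_sum]

theorem map_dft_of_conj (f : E →ₗ⋆[ℂ] F) (Φ : ZMod N → E) (k : ZMod N) :
    f (𝓕 Φ k) = 𝓕 (f ∘ Φ) (-k) := by
  simp [dft_apply, map_sum, map_smulₛₗ, ← AddChar.map_neg_eq_conj]

theorem conj_dft (φ : ZMod N → ℂ) (k : ZMod N) : conj (𝓕 φ k) = 𝓕 (conj ∘ φ) (-k) :=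
  map_dft_of_conj (starLinearEquiv ℂ (A := ℂ)).toLinearMap φ k

theorem forall_conj_eq_iff_dft_neg (φ : ZMod N → ℂ) :
    (∀ k, conj (φ k) = φ k) ↔ ∀ k, 𝓕 φ (-k) = conj (𝓕 φ k) := by
  rw [show (∀ k, conj (φ k) = φ k) ↔ conj ∘ φ = φ from funext_iff.symm]
  constructor
  · intro h k
    rw [conj_dft, h]
  · intro h
    refine dft.injective (funext fun k => ?_)
    simpa [h] using (conj_dft φ (-k)).symm

theorem dft_conv {l m o : Type*} [Fintype m] (Φ : ZMod N → Matrix l m ℂ)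
    (Ψ : ZMod N → Matrix m o ℂ) (k : ZMod N) :
    𝓕 (fun i => ∑ j, Φ (i - j) * Ψ j) k = 𝓕 Φ k * 𝓕 Ψ k := by
  calc 𝓕 (fun i => ∑ j, Φ (i - j) * Ψ j) k
      = ∑ j, ∑ i, stdAddChar (-(i * k)) • (Φ (i - j) * Ψ j) := by
        simp only [dft_apply, Finset.smul_sum]
        exact Finset.sum_comm
    _ = ∑ j, ∑ i, (stdAddChar (-(i * k)) • Φ i) * (stdAddChar (-(j * k)) • Ψ j) := by
        refine Finset.sum_congr rfl fun j _ => Fintype.sum_equiv (Equiv.subRight j) _ _ fun i => ?_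
        rw [Equiv.subRight_apply, Matrix.smul_mul, Matrix.mul_smul, smul_smul,
          ← AddChar.map_add_eq_mul]
        ring_nf
    _ = 𝓕 Φ k * 𝓕 Ψ k := by
        simp only [dft_apply, Matrix.sum_mul, Matrix.mul_sum]

theorem dft_star_comp_neg {l m : Type*} [Fintype l] [Fintype m] (Φ : ZMod N → Matrix l m ℂ)
    (k : ZMod N) :
    𝓕 (fun j => (Φ (-j))ᴴ) k = (𝓕 Φ k)ᴴ := by
  rw [dft_comp_neg (fun j => (Φ j)ᴴ)]
  exact (map_dft_of_conj (conjTransposeLinearEquiv l m ℂ ℂ).toLinearMap Φ k).symm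

end ZMod

section TensorDFT

variable [NeZero n] {a b c : ℕ}

/-- The DFT of the frontal slices, i.e. `fft(X, [], 3)`. -/
noncomputable def tDFT (X : ZMod n → Matrix (Fin a) (Fin b) ℝ) :
    ZMod n → Matrix (Fin a) (Fin b) ℂ :=
  𝓕 fun k => (X k).map Complex.ofRealHom

theorem tDFT_injective : Function.Injective (tDFT (n := n) (a := a) (b := b)) := by
  intro X Y h
  have := ZMod.dft.injective h
  funext k
  exact Matrix.map_injective Complex.ofRealHom.injective (congrFun this k)

theorem tDFT_apply_apply (X : ZMod n → Matrix (Fin a) (Fin b) ℝ) (ω : ZMod n) (i : Fin a)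
    (j : Fin b) :
    tDFT X ω i j = 𝓕 (fun k => (X k i j : ℂ)) ω :=
  ZMod.map_dft (Matrix.entryLinearMap ℂ ℂ i j) _ ω

theorem tDFT_tMul (X : ZMod n → Matrix (Fin a) (Fin b) ℝ) (Y : ZMod n → Matrix (Fin b) (Fin c) ℝ)
    (ω : ZMod n) : tDFT (tMul X Y) ω = tDFT X ω * tDFT Y ω := by
  have hslices : (fun k => (tMul X Y k).map Complex.ofRealHom) =
      fun k => ∑ j, (X (k - j)).map Complex.ofRealHom * (Y j).map Complex.ofRealHom := by
    funext k
    ext i j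
    simp [tMul, Matrix.sum_apply, Matrix.mul_apply]
  simp only [tDFT, hslices]
  exact ZMod.dft_conv (fun k => (X k).map Complex.ofRealHom)
    (fun k => (Y k).map Complex.ofRealHom) ω

theorem tDFT_tTranspose (X : ZMod n → Matrix (Fin a) (Fin b) ℝ) (ω : ZMod n) :
    tDFT (tTranspose X) ω = (tDFT X ω)ᴴ := by
  have hslices : (fun k => (tTranspose X k).map Complex.ofRealHom) =
      fun k => ((X (-k)).map Complex.ofRealHom)ᴴ := by
    funext k
    ext i j
    simp [tTranspose]
  simp only [tDFT, hslices]
  exact ZMod.dft_star_comp_neg (fun k => (X k).map Complex.ofRealHom) ω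

theorem tDFT_tId (m : ℕ) (ω : ZMod n) : tDFT (tId n m) ω = 1 := by
  rw [tDFT, ZMod.dft_apply, Finset.sum_eq_single 0]
  · simp [tId]
  · intro k _ hk
    simp [tId, hk]
  · simp

theorem tDFT_neg (X : ZMod n → Matrix (Fin a) (Fin b) ℝ) (ω : ZMod n) :
    tDFT X (-ω) = (tDFT X ω).map conj := by
  ext i j
  rw [Matrix.map_apply, tDFT_apply_apply, tDFT_apply_apply]
  exact (ZMod.forall_conj_eq_iff_dft_neg _).1 (fun k => Complex.conj_ofReal _) ω

theorem exists_tDFT_eq (G : ZMod n → Matrix (Fin a) (Fin b) ℂ)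
    (hG : ∀ ω, G (-ω) = (G ω).map conj) : ∃ X, tDFT X = G := by
  set Φ := 𝓕⁻ G
  have hreal (i : Fin a) (j : Fin b) (k : ZMod n) : conj (Φ k i j) = Φ k i j := by
    have hdft (ω : ZMod n) : 𝓕 (fun k => Φ k i j) ω = G ω i j := by
      rw [← LinearEquiv.apply_symm_apply ZMod.dft G]
      exact (ZMod.map_dft (Matrix.entryLinearMap ℂ ℂ i j) Φ ω).symm
    refine (ZMod.forall_conj_eq_iff_dft_neg (fun k => Φ k i j)).2 (fun ω => ?_) k
    rw [hdft, hdft, hG, Matrix.map_apply]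
  refine ⟨fun k => (Φ k).map Complex.re, ?_⟩
  have hslices : (fun k => ((Φ k).map Complex.re).map Complex.ofRealHom) = Φ := by
    funext k
    ext i j
    exact Complex.conj_eq_iff_re.mp (hreal i j k)
  rw [tDFT, hslices, LinearEquiv.apply_symm_apply]

theorem tOrthogonal_iff_forall_tDFT_mem_unitaryGroup {m : ℕ}
    (Q : ZMod n → Matrix (Fin m) (Fin m) ℝ) :
    tOrthogonal Q ↔ ∀ ω, tDFT Q ω ∈ Matrix.unitaryGroup (Fin m) ℂ := by
  simp only [tOrthogonal, ← tDFT_injective.eq_iff, funext_iff, tDFT_tMul, tDFT_tTranspose,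
    tDFT_tId, ← forall_and, Unitary.mem_iff]
  rfl

theorem isRectDiag_of_forall_tDFT (S : ZMod n → Matrix (Fin a) (Fin b) ℝ)
    (h : ∀ ω, (tDFT S ω).IsRectDiag) (k : ZMod n) : (S k).IsRectDiag := by
  intro i j hij
  have h0 : 𝓕 (fun k => (S k i j : ℂ)) = 0 :=
    funext fun ω => by rw [← tDFT_apply_apply, h ω i j hij, Pi.zero_apply]
  simpa using congrFun (ZMod.dft.map_eq_zero_iff.mp h0) k

end TensorDFT

/-- Existence of the tensor SVD (t-SVD): every third-order tensor factors as
`U ∗ S ∗ Vᵀ` with `U`, `V` orthogonal and `S` f-diagonal. -/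
theorem tsvd_exists (n I₁ I₂ : ℕ) [NeZero n]
    (X : ZMod n → Matrix (Fin I₁) (Fin I₂) ℝ) :
    ∃ (U : ZMod n → Matrix (Fin I₁) (Fin I₁) ℝ)
      (V : ZMod n → Matrix (Fin I₂) (Fin I₂) ℝ)
      (S : ZMod n → Matrix (Fin I₁) (Fin I₂) ℝ),
      tOrthogonal U ∧ tOrthogonal V ∧
      (∀ (k : ZMod n) (i : Fin I₁) (j : Fin I₂), (i : ℕ) ≠ (j : ℕ) → S k i j = 0) ∧
      X = tMul (tMul U S) (tTranspose V) := by
  obtain ⟨F, hF⟩ := exists_forall_and_map_neg_eq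
    (P := fun ω t => (tDFT X ω).IsSVD t.1 t.2.1 t.2.2)
    (c := fun t => (t.1.map conj, t.2.1.map conj, t.2.2.map conj))
    (fun t => by simp [Matrix.map_map, Function.comp_def])
    (fun ω t ht => by simpa [tDFT_neg] using ht.map (f := starRingEnd ℂ) fun _ => rfl)
    (fun ω => by
      obtain ⟨U, V, D, h, hreal⟩ := (tDFT X ω).exists_isSVD_map_conj_eq
      exact ⟨(U, V, D), h, fun hω => by simpa using hreal (by rw [← tDFT_neg, hω])⟩)
  obtain ⟨U, hU⟩ := exists_tDFT_eq (fun ω => (F ω).1) fun ω => by rw [(hF ω).2]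
  obtain ⟨V, hV⟩ := exists_tDFT_eq (fun ω => (F ω).2.1) fun ω => by rw [(hF ω).2]
  obtain ⟨S, hS⟩ := exists_tDFT_eq (fun ω => (F ω).2.2) fun ω => by rw [(hF ω).2]
  refine ⟨U, V, S, (tOrthogonal_iff_forall_tDFT_mem_unitaryGroup U).2 fun ω => ?_,
    (tOrthogonal_iff_forall_tDFT_mem_unitaryGroup V).2 fun ω => ?_,
    isRectDiag_of_forall_tDFT S fun ω => ?_, tDFT_injective (funext fun ω => ?_)⟩
  · exact hU ▸ (hF ω).1.unitary_left
  · exact hV ▸ (hF ω).1.unitary_right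
  · exact hS ▸ (hF ω).1.isRectDiag
  · rw [tDFT_tMul, tDFT_tMul, tDFT_tTranspose, hU, hV, hS]
    exact (hF ω).1.eq
end

section
/- Best tubal-rank approximation property of the truncated t-SVD (tensor Eckart–Young): let n ≥ 1, let X : ZMod n → Matrix (Fin I₁) (Fin I₂) ℝ, and let r be a natural number. Then there exist tensors B : ZMod n → Matrix (Fin I₁) (Fin r) ℝ and C : ZMod n → Matrix (Fin r) (Fin I₂) ℝ such that for all tensors B' : ZMod n → Matrix (Fin I₁) (Fin r) ℝ and C' : ZMod n → Matrix (Fin r) (Fin I₂) ℝ, one has ‖X − B ∗ C‖_F ≤ ‖X − B' ∗ C'‖_F; that is, the infimum of the Frobenius-norm error over all t-products with inner tubal dimension r is attained. -/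
/-
Under the discrete Fourier transform along the tubes the t-product becomes the slicewise matrix
product, so the tensors `B ∗ C` of inner dimension `r` are exactly the real tensors all of whose
Fourier slices have rank at most `r`: the slices of a real tensor satisfy `X̂ (-t) = conj (X̂ t)`,
and factorizations of the slices chosen compatibly with this symmetry (real ones at the
self-conjugate frequencies) are again Fourier slices of real tensors. Rank at most `r` is a closed
condition, so these tensors form a closed set, and a nonempty closed subset of a
finite-dimensional Euclidean space contains a point nearest to `X`.
-/

open Matrix

variable {n : ℕ}

/-- The Frobenius norm of a third-order tensor. -/
noncomputable def tFrobNorm [NeZero n] {a b : ℕ}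
    (X : ZMod n → Matrix (Fin a) (Fin b) ℝ) : ℝ :=
  Real.sqrt (∑ k : ZMod n, ∑ i : Fin a, ∑ j : Fin b, (X k i j) ^ 2)

open ZMod

namespace Matrix

variable {l m : Type*} [Fintype m]

theorem exists_mul_eq_of_rank_le {K : Type*} [Field K] [DecidableEq m]
    {A : Matrix l m K} {r : ℕ} (h : A.rank ≤ r) :
    ∃ (P : Matrix l (Fin r) K) (Q : Matrix (Fin r) m K), A = P * Q := by
  let f := A.mulVecLin
  obtain ⟨e, he⟩ : ∃ e : LinearMap.range f →ₗ[K] (Fin r → K), Function.Injective e :=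
    finrank_le_iff_exists_linearMap.mp (h.trans_eq (Module.finrank_fin_fun K).symm)
  obtain ⟨p, hp⟩ := e.exists_leftInverse_of_injective (LinearMap.ker_eq_bot.mpr he)
  refine ⟨LinearMap.toMatrix' ((LinearMap.range f).subtype ∘ₗ p),
    LinearMap.toMatrix' (e ∘ₗ f.rangeRestrict), ?_⟩
  rw [← LinearMap.toMatrix'_comp, LinearMap.comp_assoc, ← LinearMap.comp_assoc _ e, hp,
    LinearMap.id_comp]
  change A = LinearMap.toMatrix' A.mulVecLin
  rw [← Matrix.toLin'_apply', LinearMap.toMatrix'_toLin']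

theorem rank_le_rank_map_algebraMap [Finite l] {K L : Type*} [Field K] [Field L] [Algebra K L]
    (A : Matrix l m K) : A.rank ≤ (A.map (algebraMap K L)).rank := by
  rw [rank_eq_finrank_span_cols, rank_eq_finrank_span_cols]
  obtain ⟨κ, a, ha, hspan, hli⟩ := exists_linearIndependent' K A.col
  have : Fintype κ := Fintype.ofInjective a ha
  have hli' : LinearIndependent L ((A.map (algebraMap K L)).col ∘ a) :=
    linearIndependent_algebraMap_comp_iff.mpr hli
  rw [← hspan, finrank_span_eq_card hli, ← finrank_span_eq_card hli']
  exact Submodule.finrank_mono (Submodule.span_mono (Set.range_comp_subset_range _ _))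

theorem isClosed_setOf_rank_le {𝕜 : Type*} [NontriviallyNormedField 𝕜] [CompleteSpace 𝕜]
    [Fintype l] [DecidableEq m] (r : ℕ) : IsClosed {A : Matrix l m 𝕜 | A.rank ≤ r} := by
  let L : Matrix l m 𝕜 →ₗ[𝕜] (m → 𝕜) →L[𝕜] (l → 𝕜) :=
    LinearMap.toContinuousLinearMap.toLinearMap ∘ₗ Matrix.toLin'.toLinearMap
  have hL : {A : Matrix l m 𝕜 | A.rank ≤ r} =
      L ⁻¹' {f | ((r + 1 : ℕ) : Cardinal) ≤ (f : (m → 𝕜) →ₗ[𝕜] l → 𝕜).rank}ᶜ := by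
    ext A
    change A.rank ≤ r ↔ ¬((r + 1 : ℕ) : Cardinal) ≤ (Matrix.toLin' A).rank
    rw [LinearMap.rank, ← Module.finrank_eq_rank, Nat.cast_le, not_le, Nat.lt_succ_iff,
      Matrix.toLin'_apply', Matrix.rank]
  rw [hL]
  exact (isOpen_setOfPred_nat_le_rank (r + 1)).isClosed_compl.preimage
    L.continuous_of_finiteDimensional

theorem exists_conj_fixed_mul_eq_of_rank_le [Finite l] [DecidableEq m] {A : Matrix l m ℂ} {r : ℕ}
    (hA : A.map (starRingEnd ℂ) = A) (h : A.rank ≤ r) :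
    ∃ (P : Matrix l (Fin r) ℂ) (Q : Matrix (Fin r) m ℂ), A = P * Q ∧
      P.map (starRingEnd ℂ) = P ∧ Q.map (starRingEnd ℂ) = Q := by
  have hre : (A.map Complex.re).map (algebraMap ℝ ℂ) = A := by
    ext i j
    exact Complex.conj_eq_iff_re.mp (congrFun (congrFun hA i) j)
  obtain ⟨P, Q, hPQ⟩ := exists_mul_eq_of_rank_le
    ((rank_le_rank_map_algebraMap (L := ℂ) _).trans (hre ▸ h))
  refine ⟨P.map (algebraMap ℝ ℂ), Q.map (algebraMap ℝ ℂ), ?_, ?_, ?_⟩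
  · rw [← hre, hPQ, Matrix.map_mul]
  all_goals ext; simp

end Matrix

theorem exists_equivariant_choice {ι α : Type*} [LinearOrder ι] [InvolutiveNeg ι] {σ : α → α}
    (hσ : Function.Involutive σ) {p : ι → α → Prop} (hp : ∀ i x, p i x → p (-i) (σ x))
    (h : ∀ i, ∃ x, p i x ∧ (-i = i → σ x = x)) :
    ∃ g : ι → α, (∀ i, p i (g i)) ∧ ∀ i, g (-i) = σ (g i) := by
  choose x hx hfix using h
  refine ⟨fun i => if i ≤ -i then x i else σ (x (-i)), fun i => ?_, fun i => ?_⟩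
  · dsimp only
    split_ifs
    · exact hx i
    · simpa using hp _ _ (hx (-i))
  · rcases lt_trichotomy i (-i) with hlt | heq | hgt
    · simp [hlt.le, hlt.not_ge]
    · simp [← heq, hfix i heq.symm]
    · simp [hgt.le, hgt.not_ge, hσ _]

section Fourier

variable [NeZero n] {l m o : Type*}

theorem ZMod.dft_matrix_conv [Fintype m] (Φ : ZMod n → Matrix l m ℂ) (Ψ : ZMod n → Matrix m o ℂ)
    (t : ZMod n) :
    𝓕 (fun k => ∑ j, Φ (k - j) * Ψ j) t = 𝓕 Φ t * 𝓕 Ψ t := by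
  simp only [dft_apply, Matrix.sum_mul, Matrix.mul_sum, Finset.smul_sum, Matrix.smul_mul,
    Matrix.mul_smul, smul_smul]
  rw [Finset.sum_comm]
  refine Finset.sum_congr rfl fun j _ => Fintype.sum_equiv (Equiv.subRight j) _ _ fun k => ?_
  rw [Equiv.subRight_apply, ← AddChar.map_add_eq_mul]
  congr 2
  ring

theorem ZMod.dft_map_conj (Φ : ZMod n → Matrix l m ℂ) (t : ZMod n) :
    (𝓕 Φ t).map (starRingEnd ℂ) = 𝓕 (fun k => (Φ k).map (starRingEnd ℂ)) (-t) := by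
  ext i j
  simp [dft_apply, Matrix.sum_apply, ← AddChar.map_neg_eq_conj]

noncomputable def tFourier (X : ZMod n → Matrix l m ℝ) : ZMod n → Matrix l m ℂ :=
  𝓕 fun k => (X k).map Complex.ofReal

theorem tFourier_tMul {a b c : ℕ} (B : ZMod n → Matrix (Fin a) (Fin b) ℝ)
    (C : ZMod n → Matrix (Fin b) (Fin c) ℝ) (t : ZMod n) :
    tFourier (tMul B C) t = tFourier B t * tFourier C t := by
  have hconv : (fun k => (tMul B C k).map Complex.ofReal)
      = fun k => ∑ j, (B (k - j)).map Complex.ofReal * (C j).map Complex.ofReal := by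
    ext k i j
    simp [tMul, Matrix.sum_apply, Matrix.mul_apply]
  rw [tFourier, hconv]
  exact dft_matrix_conv (fun k => (B k).map Complex.ofReal) (fun k => (C k).map Complex.ofReal) t

theorem tFourier_neg (X : ZMod n → Matrix l m ℝ) (t : ZMod n) :
    tFourier X (-t) = (tFourier X t).map (starRingEnd ℂ) := by
  have hreal : (fun k => ((X k).map Complex.ofReal).map (starRingEnd ℂ))
      = fun k => (X k).map Complex.ofReal := by
    ext k i j
    simp
  rw [tFourier, dft_map_conj, hreal]

theorem tFourier_injective : Function.Injective (tFourier (n := n) (l := l) (m := m)) := by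
  intro X Y h
  funext k
  exact Matrix.map_injective Complex.ofReal_injective (congrFun (dft.injective h) k)

theorem exists_tFourier_eq {Ψ : ZMod n → Matrix l m ℂ}
    (hΨ : ∀ t, Ψ (-t) = (Ψ t).map (starRingEnd ℂ)) : ∃ X, tFourier X = Ψ := by
  set Y := 𝓕⁻ Ψ
  have hY : (fun k => (Y k).map (starRingEnd ℂ)) = Y := by
    apply dft.injective
    funext t
    rw [← neg_neg t, ← dft_map_conj, LinearEquiv.apply_symm_apply, hΨ, neg_neg]
    ext
    simp
  refine ⟨fun k => (Y k).map Complex.re, ?_⟩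
  rw [← LinearEquiv.apply_symm_apply dft Ψ, tFourier]
  congr 1
  funext k
  ext i j
  exact Complex.conj_eq_iff_re.mp (congrFun (congrFun (congrFun hY k) i) j)

theorem continuous_tFourier_apply (t : ZMod n) :
    Continuous fun X : ZMod n → Matrix l m ℝ => tFourier X t := by
  simp only [tFourier, dft_apply]
  fun_prop

end Fourier

section TubalRank

variable [NeZero n] {a b c : ℕ}

theorem exists_tMul_eq_iff_forall_rank_tFourier_le {M : ZMod n → Matrix (Fin a) (Fin c) ℝ} :
    (∃ (B : ZMod n → Matrix (Fin a) (Fin b) ℝ) (C : ZMod n → Matrix (Fin b) (Fin c) ℝ),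
      tMul B C = M) ↔ ∀ t, (tFourier M t).rank ≤ b := by
  constructor
  · rintro ⟨B, C, rfl⟩ t
    rw [tFourier_tMul]
    exact (rank_mul_le_left _ _).trans (rank_le_width _)
  intro hrank
  let σ : Matrix (Fin a) (Fin b) ℂ × Matrix (Fin b) (Fin c) ℂ → _ :=
    fun PQ => (PQ.1.map (starRingEnd ℂ), PQ.2.map (starRingEnd ℂ))
  have hσ : Function.Involutive σ := fun PQ => by ext <;> simp [σ]
  have hslice : ∀ t, ∃ PQ, tFourier M t = PQ.1 * PQ.2 ∧ (-t = t → σ PQ = PQ) := by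
    intro t
    by_cases ht : -t = t
    · have hconj : (tFourier M t).map (starRingEnd ℂ) = tFourier M t := by
        rw [← tFourier_neg, ht]
      obtain ⟨P, Q, hPQ, hP, hQ⟩ := exists_conj_fixed_mul_eq_of_rank_le hconj (hrank t)
      exact ⟨(P, Q), hPQ, fun _ => by simp [σ, hP, hQ]⟩
    · obtain ⟨P, Q, hPQ⟩ := exists_mul_eq_of_rank_le (hrank t)
      exact ⟨(P, Q), hPQ, fun h => absurd h ht⟩
  -- any linear order on `ZMod n` serves to pick one frequency out of each pair `{t, -t}`
  let : LinearOrder (ZMod n) := LinearOrder.lift' ZMod.val (ZMod.val_injective n)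
  obtain ⟨PQ, hPQ, hsymm⟩ := exists_equivariant_choice hσ
    (p := fun t PQ => tFourier M t = PQ.1 * PQ.2)
    (fun t PQ h => by rw [tFourier_neg, h, Matrix.map_mul]) hslice
  obtain ⟨B, hB⟩ := exists_tFourier_eq (Ψ := fun t => (PQ t).1) fun t => congrArg Prod.fst (hsymm t)
  obtain ⟨C, hC⟩ := exists_tFourier_eq (Ψ := fun t => (PQ t).2) fun t => congrArg Prod.snd (hsymm t)
  refine ⟨B, C, tFourier_injective (funext fun t => ?_)⟩
  rw [tFourier_tMul, hB, hC, hPQ]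

theorem isClosed_setOf_exists_tMul_eq :
    IsClosed {M : ZMod n → Matrix (Fin a) (Fin c) ℝ |
      ∃ (B : ZMod n → Matrix (Fin a) (Fin b) ℝ) (C : ZMod n → Matrix (Fin b) (Fin c) ℝ),
        tMul B C = M} := by
  simp_rw [exists_tMul_eq_iff_forall_rank_tFourier_le, Set.ofPred_forall]
  exact isClosed_iInter fun t => (isClosed_setOf_rank_le b).preimage (continuous_tFourier_apply t)

theorem IsClosed.exists_tFrobNorm_sub_le {S : Set (ZMod n → Matrix (Fin a) (Fin b) ℝ)}
    (hS : IsClosed S) (hne : S.Nonempty) (X : ZMod n → Matrix (Fin a) (Fin b) ℝ) :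
    ∃ M ∈ S, ∀ M' ∈ S, tFrobNorm (X - M) ≤ tFrobNorm (X - M') := by
  let toE : (ZMod n → Matrix (Fin a) (Fin b) ℝ) → EuclideanSpace ℝ (ZMod n × Fin a × Fin b) :=
    fun M => WithLp.toLp 2 fun p => M p.1 p.2.1 p.2.2
  let ofE : EuclideanSpace ℝ (ZMod n × Fin a × Fin b) → (ZMod n → Matrix (Fin a) (Fin b) ℝ) :=
    fun v k => Matrix.of fun i j => v (k, i, j)
  have hofE : Continuous ofE := by fun_prop
  have hdist : ∀ M, tFrobNorm (X - M) = dist (toE X) (toE M) := by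
    intro M
    simp [EuclideanSpace.dist_eq, tFrobNorm, toE, Fintype.sum_prod_type, Real.dist_eq, sq_abs]
  obtain ⟨M, hM⟩ := hne
  obtain ⟨y, hyS, hy⟩ := (hS.preimage hofE).exists_infDist_eq_dist ⟨toE M, hM⟩ (toE X)
  refine ⟨ofE y, hyS, fun M' hM' => ?_⟩
  rw [hdist, hdist]
  exact hy ▸ Metric.infDist_le_dist_of_mem (show ofE (toE M') ∈ S from hM')

end TubalRank

/-- Best tubal-rank approximation (tensor Eckart–Young): the infimum of the
Frobenius-norm error over all t-products with inner tubal dimension `r` is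
attained. -/
theorem tsvd_best_tubal_rank_approx (n I₁ I₂ r : ℕ) [NeZero n]
    (X : ZMod n → Matrix (Fin I₁) (Fin I₂) ℝ) :
    ∃ (B : ZMod n → Matrix (Fin I₁) (Fin r) ℝ)
      (C : ZMod n → Matrix (Fin r) (Fin I₂) ℝ),
      ∀ (B' : ZMod n → Matrix (Fin I₁) (Fin r) ℝ)
        (C' : ZMod n → Matrix (Fin r) (Fin I₂) ℝ),
        tFrobNorm (X - tMul B C) ≤ tFrobNorm (X - tMul B' C') := by
  obtain ⟨_, ⟨B, C, rfl⟩, hmin⟩ :=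
    isClosed_setOf_exists_tMul_eq.exists_tFrobNorm_sub_le ⟨_, 0, 0, rfl⟩ X
  exact ⟨B, C, fun B' C' => hmin _ ⟨B', C', rfl⟩⟩
end

section
/- Orthogonal invariance of the Frobenius norm under the t-product: if Q : ZMod n → Matrix (Fin I₁) (Fin I₁) ℝ is orthogonal under the t-product and X : ZMod n → Matrix (Fin I₁) (Fin I₂) ℝ is any tensor, then ‖Q ∗ X‖_F = ‖X‖_F. -/
open Matrix

variable {n : ℕ}

lemma tMul_assoc [NeZero n] {a b c d : ℕ}
    (X : ZMod n → Matrix (Fin a) (Fin b) ℝ) (Y : ZMod n → Matrix (Fin b) (Fin c) ℝ)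
    (Z : ZMod n → Matrix (Fin c) (Fin d) ℝ) :
    tMul (tMul X Y) Z = tMul X (tMul Y Z) := by
  funext k
  simp only [tMul, Matrix.sum_mul, Matrix.mul_sum]
  conv_rhs => rw [Finset.sum_comm]
  refine Finset.sum_congr rfl fun t _ => ?_
  refine Fintype.sum_equiv (Equiv.addRight t) _ _ fun i => ?_
  simp [Equiv.addRight, sub_sub, Matrix.mul_assoc, add_comm]

lemma tTranspose_tMul [NeZero n] {a b c : ℕ}
    (X : ZMod n → Matrix (Fin a) (Fin b) ℝ) (Y : ZMod n → Matrix (Fin b) (Fin c) ℝ) :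
    tTranspose (tMul X Y) = tMul (tTranspose Y) (tTranspose X) := by
  funext k
  simp only [tMul, tTranspose, transpose_sum, transpose_mul]
  refine Fintype.sum_equiv (Equiv.addRight k) _ _ fun j => ?_
  simp [Equiv.addRight, neg_add_rev, sub_eq_add_neg]

lemma tId_tMul [NeZero n] {a b : ℕ} (X : ZMod n → Matrix (Fin a) (Fin b) ℝ) :
    tMul (tId n a) X = X := by
  funext k
  simp only [tMul, tId]
  rw [Finset.sum_eq_single k]
  · simp
  · intro j _ hj
    rw [if_neg (by simpa [sub_eq_zero] using fun h => hj h.symm), Matrix.zero_mul]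
  · simp

lemma sq_sum_eq [NeZero n] {a b : ℕ} (X : ZMod n → Matrix (Fin a) (Fin b) ℝ) :
    ∑ k : ZMod n, ∑ i : Fin a, ∑ j : Fin b, (X k i j) ^ 2
      = ∑ j : Fin b, (tMul (tTranspose X) X) 0 j j := by
  simp only [tMul, tTranspose]
  simp only [Matrix.sum_apply, Matrix.mul_apply, transpose_apply, zero_sub, neg_neg]
  conv_rhs => rw [Finset.sum_comm]
  refine Finset.sum_congr rfl fun k _ => ?_
  conv_rhs => rw [Finset.sum_comm]
  simp [sq]

/-- Orthogonal invariance of the Frobenius norm under the t-product. -/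
theorem tFrobNorm_tMul_orthogonal (n I₁ I₂ : ℕ) [NeZero n]
    (Q : ZMod n → Matrix (Fin I₁) (Fin I₁) ℝ) (hQ : tOrthogonal Q)
    (X : ZMod n → Matrix (Fin I₁) (Fin I₂) ℝ) :
    tFrobNorm (tMul Q X) = tFrobNorm X := by
  obtain ⟨h1, -⟩ := hQ
  unfold tFrobNorm
  congr 1
  rw [sq_sum_eq (tMul Q X), sq_sum_eq X, tTranspose_tMul, tMul_assoc,
    ← tMul_assoc (tTranspose Q) Q X, h1, tId_tMul]
end
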